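/- arXiv:1002.2166 — 9 statements merged into one kernel-verified Lean document; each statement's English description precedes it below -/
import Mathlib

section
/- Let P be a partial monoid. Define the partial evaluation peval : FreeMagma P → Option P by peval(x) = some x for a generator x ∈ P, and peval(t₁·t₂) = some (a × b) if peval(t₁) = some a, peval(t₂) = some b and (a,b) ∈ dom(×), and peval(t₁·t₂) = none otherwise. Then for any two elements t, t' of the free magma FreeMagma P having the same ordered list of leaves, peval(t) = peval(t'). In particular, if an n-fold product x₁ × x₂ × ⋯ × xₙ is defined for one choice of bracketing, it is defined for every bracketing, and all the values are equal. -/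
/-- A partial monoid: a type `P` with a partial multiplication (encoded as a total
function `mul` together with a domain predicate `dom`; the value of `mul` is only
meaningful on `dom`) and a total identity `one`. -/
structure PartialMonoid (P : Type*) where
  dom : P → P → Prop
  mul : P → P → P
  one : P
  dom_one_right : ∀ x, dom x one
  dom_one_left : ∀ x, dom one x
  mul_one : ∀ x, mul x one = x
  one_mul : ∀ x, mul one x = x
  dom_assoc : ∀ x y z, (dom x y ∧ dom (mul x y) z) ↔ (dom y z ∧ dom x (mul y z))
  mul_assoc : ∀ x y z, dom x y → dom (mul x y) z → mul (mul x y) z = mul x (mul y z)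

attribute [local instance] Classical.propDecidable

/-- Partial evaluation of a nonassociative word (binary tree) over `P`:
`some` of the product if every intermediate product is defined, `none` otherwise. -/
noncomputable def peval {P : Type*} (M : PartialMonoid P) : FreeMagma P → Option P
  | FreeMagma.of x => some x
  | FreeMagma.mul t₁ t₂ =>
      (peval M t₁).bind fun a => (peval M t₂).bind fun b =>
        if M.dom a b then some (M.mul a b) else none

/-- The ordered list of leaves of a binary tree, read from left to right. -/
def leafList {P : Type*} : FreeMagma P → List P
  | FreeMagma.of x => [x]
  | FreeMagma.mul t₁ t₂ => leafList t₁ ++ leafList t₂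

/-- Lift of the partial product to `Option P`. -/
noncomputable def pprod {P : Type*} (M : PartialMonoid P) (a b : Option P) : Option P :=
  a.bind fun x => b.bind fun y => if M.dom x y then some (M.mul x y) else none

lemma pprod_assoc {P : Type*} (M : PartialMonoid P) (a b c : Option P) :
    pprod M (pprod M a b) c = pprod M a (pprod M b c) := by
  cases a with
  | none => simp [pprod]
  | some x =>
    cases b with
    | none => simp [pprod]
    | some y =>
      cases c with
      | none => simp [pprod]
      | some z =>
        by_cases hxy : M.dom x y <;> by_cases hyz : M.dom y z
        · by_cases h1 : M.dom (M.mul x y) z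
          · have h2 : M.dom x (M.mul y z) := ((M.dom_assoc x y z).mp ⟨hxy, h1⟩).2
            simp [pprod, hxy, hyz, h1, h2, M.mul_assoc x y z hxy h1]
          · have h2 : ¬ M.dom x (M.mul y z) := fun h2 =>
              h1 ((M.dom_assoc x y z).mpr ⟨hyz, h2⟩).2
            simp [pprod, hxy, hyz, h1, h2]
        · have h1 : ¬ M.dom (M.mul x y) z := fun h1 =>
            hyz ((M.dom_assoc x y z).mp ⟨hxy, h1⟩).1
          simp [pprod, hxy, hyz, h1]
        · have h2 : ¬ M.dom x (M.mul y z) := fun h2 =>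
            hxy ((M.dom_assoc x y z).mpr ⟨hyz, h2⟩).1
          simp [pprod, hxy, hyz, h2]
        · simp [pprod, hxy, hyz]

/-- Partial evaluation of a list of factors. -/
noncomputable def pevalList {P : Type*} (M : PartialMonoid P) : List P → Option P
  | [] => some M.one
  | x :: l => pprod M (some x) (pevalList M l)

lemma pprod_one_left {P : Type*} (M : PartialMonoid P) (b : Option P) :
    pprod M (some M.one) b = b := by
  cases b with
  | none => simp [pprod]
  | some y => simp [pprod, M.dom_one_left, M.one_mul]

lemma pevalList_append {P : Type*} (M : PartialMonoid P) (l₁ l₂ : List P) :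
    pevalList M (l₁ ++ l₂) = pprod M (pevalList M l₁) (pevalList M l₂) := by
  induction l₁ with
  | nil => simp [pevalList, pprod_one_left]
  | cons x l ih => simp [pevalList, ih, pprod_assoc]

lemma peval_eq_pevalList {P : Type*} (M : PartialMonoid P) (t : FreeMagma P) :
    peval M t = pevalList M (leafList t) := by
  induction t using FreeMagma.rec with
  | of x => simp [peval, leafList, pevalList, pprod, M.dom_one_right, M.mul_one]
  | mul t₁ t₂ ih₁ ih₂ =>
    show pprod M (peval M t₁) (peval M t₂) = _
    rw [leafList, pevalList_append, ih₁, ih₂]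

/-- Two bracketings of the same sequence of factors have the same partial evaluation:
if one is defined then so is the other and the values agree. -/
theorem peval_eq_of_leafList_eq {P : Type*} (M : PartialMonoid P)
    (t t' : FreeMagma P) (h : leafList t = leafList t') :
    peval M t = peval M t' := by
  rw [peval_eq_pevalList, peval_eq_pevalList, h]
end

section
/- Let P be a partial monoid and R_P its associated semi-Thue system. Then ⇒_R is confluent if and only if every essential critical pair of R_P converges. -/
/-- One-step reduction `⇒_R` of the semi-Thue system `R_P` associated with the
partial monoid `P`: contract a composable factor `x·y` to `x×y`, or erase a
letter `1_P`. -/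
inductive Red {P : Type*} (M : PartialMonoid P) : List P → List P → Prop
  | mul (u v : List P) (x y : P) (h : M.dom x y) :
      Red M (u ++ x :: y :: v) (u ++ M.mul x y :: v)
  | one (u v : List P) : Red M (u ++ M.one :: v) (u ++ v)

/-- A word is irreducible (a normal form) if no one-step reduction applies to it. -/
def Irr {P : Type*} (M : PartialMonoid P) (w : List P) : Prop :=
  ¬ ∃ w', Red M w w'

/-- Confluence of a relation. -/
def Confluent {α : Type*} (r : α → α → Prop) : Prop :=
  ∀ a b c, Relation.ReflTransGen r a b → Relation.ReflTransGen r a c →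
    ∃ d, Relation.ReflTransGen r b d ∧ Relation.ReflTransGen r c d

/-!
Every rewriting step shortens the word, so `⇒_R` terminates and, by Newman's lemma, it is
confluent as soon as it is locally confluent. Two one-step reductions of the same word act
on disjoint factors, or start at the same letter (and then give the same word, because
`1_P × y = y`), or one contracts `x·y` while the other rewrites a factor starting at `y`. In
the last case either `y = 1_P` is erased, and `x × 1_P = x` closes the diagram, or `y·z` is
contracted, and the two results form an essential critical pair.
-/

open Relation

section Newman

variable {α : Type*} {r : α → α → Prop}

def LocallyConfluent (r : α → α → Prop) : Prop :=
  ∀ a b c, r a b → r a c → Join (ReflTransGen r) b c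

theorem confluent_of_locallyConfluent (hwf : WellFounded (flip r))
    (hloc : LocallyConfluent r) : Confluent r := by
  intro a
  induction a using hwf.induction with
  | _ a ih =>
  intro b c hab hac
  rcases hab.cases_head with rfl | ⟨b₁, hab₁, hb₁b⟩
  · exact ⟨c, hac, .refl⟩
  rcases hac.cases_head with rfl | ⟨c₁, hac₁, hc₁c⟩
  · exact ⟨b, .refl, hab⟩
  obtain ⟨d, hb₁d, hc₁d⟩ := hloc a b₁ c₁ hab₁ hac₁
  obtain ⟨e, hbe, hde⟩ := ih b₁ hab₁ b d hb₁b hb₁d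
  obtain ⟨f, hcf, hef⟩ := ih c₁ hac₁ c e hc₁c (hc₁d.trans hde)
  exact ⟨f, hbe.trans hef, hcf⟩

end Newman

def EssentialCriticalPairsConverge {P : Type*} (M : PartialMonoid P) : Prop :=
  ∀ x y z : P, M.dom x y → M.dom y z →
    Join (ReflTransGen (Red M)) [M.mul x y, z] [x, M.mul y z]

namespace Red

variable {P : Type*} {M : PartialMonoid P}

inductive Rule (M : PartialMonoid P) : List P → List P → Prop
  | mul {x y : P} (h : M.dom x y) : Rule M [x, y] [M.mul x y]
  | one : Rule M [M.one] []

theorem of_rule {l r : List P} (h : Rule M l r) (u v : List P) :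
    Red M (u ++ l ++ v) (u ++ r ++ v) := by
  cases h with
  | mul h => simpa using Red.mul u v _ _ h
  | one => simpa using Red.one u v

theorem iff_exists_rule {a b : List P} :
    Red M a b ↔ ∃ u l r v, Rule M l r ∧ a = u ++ l ++ v ∧ b = u ++ r ++ v := by
  constructor
  · rintro (⟨u, v, x, y, h⟩ | ⟨u, v⟩)
    · exact ⟨u, _, _, v, .mul h, by simp, by simp⟩
    · exact ⟨u, _, _, v, .one, by simp, by simp⟩
  · rintro ⟨u, l, r, v, h, rfl, rfl⟩
    exact of_rule h u v

theorem length_lt {a b : List P} (h : Red M a b) : b.length < a.length := by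
  cases h <;> simp

theorem wellFounded_flip : WellFounded (flip (Red M)) :=
  Subrelation.wf (fun h => length_lt h) (measure List.length).wf

theorem append_left {s t : List P} (u : List P) (h : Red M s t) : Red M (u ++ s) (u ++ t) := by
  obtain ⟨u', l, r, v, hr, rfl, rfl⟩ := iff_exists_rule.mp h
  simpa using of_rule hr (u ++ u') v

theorem append_right {s t : List P} (v : List P) (h : Red M s t) : Red M (s ++ v) (t ++ v) := by
  obtain ⟨u, l, r, v', hr, rfl, rfl⟩ := iff_exists_rule.mp h
  simpa using of_rule hr u (v' ++ v)

theorem join_append_left {s t : List P} (u : List P) (h : Join (ReflTransGen (Red M)) s t) :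
    Join (ReflTransGen (Red M)) (u ++ s) (u ++ t) :=
  let ⟨d, hs, ht⟩ := h
  ⟨u ++ d, hs.lift (u ++ ·) fun _ _ => append_left u,
    ht.lift (u ++ ·) fun _ _ => append_left u⟩

theorem join_append_right {s t : List P} (v : List P) (h : Join (ReflTransGen (Red M)) s t) :
    Join (ReflTransGen (Red M)) (s ++ v) (t ++ v) :=
  let ⟨d, hs, ht⟩ := h
  ⟨d ++ v, hs.lift (· ++ v) fun _ _ => append_right v,
    ht.lift (· ++ v) fun _ _ => append_right v⟩

theorem Rule.append_eq_of_append_eq {l₁ r₁ l₂ r₂ v₁ v₂ : List P} (h₁ : Rule M l₁ r₁)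
    (h₂ : Rule M l₂ r₂) (heq : l₁ ++ v₁ = l₂ ++ v₂) : r₁ ++ v₁ = r₂ ++ v₂ := by
  cases h₁ <;> cases h₂ <;> simp only [List.cons_append, List.nil_append, List.cons.injEq] at heq <;>
    grind [M.one_mul]

theorem join_of_disjoint {l₁ r₁ l₂ r₂ : List P} (h₁ : Rule M l₁ r₁) (h₂ : Rule M l₂ r₂)
    (w v : List P) : Join (ReflTransGen (Red M)) (r₁ ++ w ++ l₂ ++ v) (l₁ ++ w ++ r₂ ++ v) :=
  ⟨r₁ ++ w ++ r₂ ++ v, .single (of_rule h₂ (r₁ ++ w) v),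
    .single (by simpa using of_rule h₁ [] (w ++ r₂ ++ v))⟩

theorem join_of_overlap (H : EssentialCriticalPairsConverge M) {x y : P} (hxy : M.dom x y)
    {l r v₁ v₂ : List P} (h : Rule M l r) (heq : y :: v₁ = l ++ v₂) :
    Join (ReflTransGen (Red M)) (M.mul x y :: v₁) (x :: (r ++ v₂)) := by
  cases h with
  | one =>
    obtain ⟨rfl, rfl⟩ : y = M.one ∧ v₁ = v₂ := by simpa using heq
    simp only [M.mul_one, List.nil_append]
    exact ⟨_, .refl, .refl⟩
  | mul hyz =>
    simp only [List.cons_append, List.nil_append, List.cons.injEq] at heq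
    obtain ⟨rfl, rfl⟩ := heq
    simpa using join_append_right v₂ (H x y _ hxy hyz)

theorem join_of_two_redexes (H : EssentialCriticalPairsConverge M) {l₁ r₁ l₂ r₂ : List P}
    (h₁ : Rule M l₁ r₁) (h₂ : Rule M l₂ r₂) {w v₁ v₂ : List P}
    (heq : l₁ ++ v₁ = w ++ l₂ ++ v₂) :
    Join (ReflTransGen (Red M)) (r₁ ++ v₁) (w ++ r₂ ++ v₂) := by
  cases w with
  | nil =>
    rw [List.nil_append, h₁.append_eq_of_append_eq h₂ (by simpa using heq)]
    exact ⟨_, .refl, .refl⟩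
  | cons t w =>
    cases h₁ with
    | one =>
      obtain ⟨rfl, rfl⟩ : M.one = t ∧ v₁ = w ++ l₂ ++ v₂ := by simpa using heq
      simpa using join_of_disjoint Rule.one h₂ w v₂
    | mul hxy =>
      cases w with
      | nil =>
        obtain ⟨rfl, htail⟩ : _ = t ∧ _ :: v₁ = l₂ ++ v₂ := by simpa using heq
        simpa using join_of_overlap H hxy h₂ htail
      | cons t' w =>
        obtain ⟨rfl, rfl, rfl⟩ : _ = t ∧ _ = t' ∧ v₁ = w ++ l₂ ++ v₂ := by simpa using heq
        simpa using join_of_disjoint (Rule.mul hxy) h₂ w v₂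

theorem locallyConfluent (H : EssentialCriticalPairsConverge M) :
    LocallyConfluent (Red M) := by
  intro a b c hab hac
  obtain ⟨u₁, l₁, r₁, v₁, h₁, rfl, rfl⟩ := iff_exists_rule.mp hab
  obtain ⟨u₂, l₂, r₂, v₂, h₂, heq, rfl⟩ := iff_exists_rule.mp hac
  simp only [List.append_assoc] at heq
  rcases List.append_eq_append_iff.mp heq with ⟨w, rfl, hw⟩ | ⟨w, rfl, hw⟩
  · simpa using join_append_left u₁ (join_of_two_redexes H h₁ h₂ (by simpa using hw))
  · obtain ⟨d, hd₂, hd₁⟩ := join_of_two_redexes H h₂ h₁ (by simpa using hw)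
    simpa using join_append_left u₂ ⟨d, hd₁, hd₂⟩

end Red

theorem Confluent.essentialCriticalPairsConverge {P : Type*} {M : PartialMonoid P}
    (h : Confluent (Red M)) : EssentialCriticalPairsConverge M := fun x y z hxy hyz =>
  h [x, y, z] _ _ (.single (Red.mul [] [z] x y hxy)) (.single (Red.mul [x] [] y z hyz))

/-- `⇒_R` is confluent iff every essential critical pair converges.
An essential critical pair is a pair `(a·z, x·b)` with `a = x×y`, `b = y×z` for some
`y` with `(x,y), (y,z) ∈ dom(×)`; it converges when both words reduce (in many steps)
to a common word. -/
theorem confluent_iff_essential_critical_pairs_converge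
    {P : Type*} (M : PartialMonoid P) :
    Confluent (Red M) ↔
      ∀ x y z : P, M.dom x y → M.dom y z →
        ∃ w : List P,
          Relation.ReflTransGen (Red M) [M.mul x y, z] w ∧
          Relation.ReflTransGen (Red M) [x, M.mul y z] w :=
  ⟨Confluent.essentialCriticalPairsConverge,
    fun H => confluent_of_locallyConfluent Red.wellFounded_flip (Red.locallyConfluent H)⟩
end

section
/- Let P be a partial monoid and R_P its associated semi-Thue system. Then ⇒_R is confluent if and only if R_P has no essential critical pair of type (A0); equivalently, ⇒_R is confluent if and only if every essential critical pair of type (A) is of type (A1), i.e. for all x,y,z ∈ P with (x,y) ∈ dom(×), (y,z) ∈ dom(×) and (x×y, z) ∉ dom(×), one has x×y = x and y×z = z. -/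
section Aux

variable {P : Type*} {M : PartialMonoid P}

/-- Two decompositions of a list around a distinguished letter. -/
lemma decomp {α : Type*} :
    ∀ (u₁ : List α) (a : α) (v₁ u₂ : List α) (b : α) (v₂ : List α),
    u₁ ++ a :: v₁ = u₂ ++ b :: v₂ →
    (u₁ = u₂ ∧ a = b ∧ v₁ = v₂) ∨
    (∃ w, u₂ = u₁ ++ a :: w ∧ v₁ = w ++ b :: v₂) ∨
    (∃ w, u₁ = u₂ ++ b :: w ∧ v₂ = w ++ a :: v₁)
  | [], a, v₁, [], b, v₂, h => by
      simp only [List.nil_append, List.cons.injEq] at h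
      exact Or.inl ⟨rfl, h.1, h.2⟩
  | [], a, v₁, c :: u₂, b, v₂, h => by
      simp only [List.nil_append, List.cons_append, List.cons.injEq] at h
      exact Or.inr (Or.inl ⟨u₂, by simp [h.1], h.2⟩)
  | c :: u₁, a, v₁, [], b, v₂, h => by
      simp only [List.nil_append, List.cons_append, List.cons.injEq] at h
      exact Or.inr (Or.inr ⟨u₁, by simp [h.1], h.2.symm⟩)
  | c :: u₁, a, v₁, d :: u₂, b, v₂, h => by
      simp only [List.cons_append, List.cons.injEq] at h
      obtain ⟨rfl, h⟩ := h
      rcases decomp u₁ a v₁ u₂ b v₂ h with ⟨rfl, h1, h2⟩ | ⟨w, hw1, hw2⟩ | ⟨w, hw1, hw2⟩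
      · exact Or.inl ⟨rfl, h1, h2⟩
      · exact Or.inr (Or.inl ⟨w, by simp [hw1], hw2⟩)
      · exact Or.inr (Or.inr ⟨w, by simp [hw1], hw2⟩)

lemma red_cases {w w' : List P} (h : Red M w w') :
    (∃ u v x y, M.dom x y ∧ w = u ++ x :: y :: v ∧ w' = u ++ M.mul x y :: v) ∨
    (∃ u v, w = u ++ M.one :: v ∧ w' = u ++ v) := by
  cases h with
  | mul u v x y hxy => exact Or.inl ⟨u, v, x, y, hxy, rfl, rfl⟩
  | one u v => exact Or.inr ⟨u, v, rfl, rfl⟩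

lemma red_mul_of_eq {A B : List P} {u v : List P} {x y : P} (h : M.dom x y)
    (hA : A = u ++ x :: y :: v) (hB : B = u ++ M.mul x y :: v) : Red M A B := by
  subst hA; subst hB; exact Red.mul u v x y h

lemma red_one_of_eq {A B : List P} {u v : List P}
    (hA : A = u ++ M.one :: v) (hB : B = u ++ v) : Red M A B := by
  subst hA; subst hB; exact Red.one u v

/-- Joinability in at most one step on each side. -/
def J (M : PartialMonoid P) (b c : List P) : Prop :=
  ∃ d, Relation.ReflGen (Red M) b d ∧ Relation.ReflGen (Red M) c d

lemma J_symm {b c : List P} (h : J M b c) : J M c b := by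
  obtain ⟨d, h1, h2⟩ := h; exact ⟨d, h2, h1⟩

lemma J_of_eq {b c : List P} (h : b = c) : J M b c :=
  ⟨b, Relation.ReflGen.refl, h ▸ Relation.ReflGen.refl⟩

/-- Shifted mul/mul overlap: the second redex starts strictly later. -/
lemma mulmul_shift
    (H : ∀ x y z : P, M.dom x y → M.dom y z → ¬ M.dom (M.mul x y) z →
        (M.mul x y = x ∧ M.mul y z = z))
    (u₁ v₁ v₂ w : List P) (x₁ y₁ x₂ y₂ : P)
    (h1 : M.dom x₁ y₁) (h2 : M.dom x₂ y₂)
    (hv : y₁ :: v₁ = w ++ x₂ :: y₂ :: v₂) :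
    J M (u₁ ++ M.mul x₁ y₁ :: v₁) ((u₁ ++ x₁ :: w) ++ M.mul x₂ y₂ :: v₂) := by
  rcases w with _ | ⟨c, w'⟩
  · -- overlap in one letter : y₁ = x₂
    simp only [List.nil_append, List.cons.injEq] at hv
    obtain ⟨rfl, rfl⟩ := hv
    by_cases hd : M.dom (M.mul x₁ y₁) y₂
    · have hd2 : M.dom x₁ (M.mul y₁ y₂) := ((M.dom_assoc x₁ y₁ y₂).1 ⟨h1, hd⟩).2
      exact ⟨u₁ ++ M.mul (M.mul x₁ y₁) y₂ :: v₂,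
        Relation.ReflGen.single (red_mul_of_eq (u := u₁) (v := v₂) hd rfl rfl),
        Relation.ReflGen.single (red_mul_of_eq (u := u₁) (v := v₂) hd2 (by simp)
          (by rw [M.mul_assoc x₁ y₁ y₂ h1 hd]))⟩
    · obtain ⟨e1, e2⟩ := H x₁ y₁ y₂ h1 h2 hd
      exact J_of_eq (by rw [e1, e2]; simp)
  · -- disjoint redexes
    simp only [List.cons_append, List.cons.injEq] at hv
    obtain ⟨rfl, rfl⟩ := hv
    refine ⟨u₁ ++ M.mul x₁ y₁ :: w' ++ M.mul x₂ y₂ :: v₂,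
      Relation.ReflGen.single
        (red_mul_of_eq (u := u₁ ++ M.mul x₁ y₁ :: w') (v := v₂) h2 (by simp) (by simp)),
      Relation.ReflGen.single
        (red_mul_of_eq (u := u₁) (v := w' ++ M.mul x₂ y₂ :: v₂) h1 (by simp) (by simp))⟩

/-- mul/one peak. -/
lemma mulone
    (u₁ v₁ u₂ v₂ : List P) (x y : P) (h : M.dom x y)
    (e : u₁ ++ x :: y :: v₁ = u₂ ++ M.one :: v₂) :
    J M (u₁ ++ M.mul x y :: v₁) (u₂ ++ v₂) := by
  rcases decomp u₁ x (y :: v₁) u₂ M.one v₂ e with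
    ⟨rfl, rfl, hv⟩ | ⟨w, hw1, hw2⟩ | ⟨w, hw1, hw2⟩
  · -- x = one
    exact J_of_eq (by rw [M.one_mul, hv])
  · rcases w with _ | ⟨c, w'⟩
    · -- y = one
      simp only [List.nil_append, List.cons.injEq] at hw2
      obtain ⟨rfl, rfl⟩ := hw2
      exact J_of_eq (by rw [M.mul_one, hw1]; simp)
    · -- disjoint, one after mul
      simp only [List.cons_append, List.cons.injEq] at hw2
      obtain ⟨rfl, rfl⟩ := hw2
      subst hw1
      refine ⟨u₁ ++ M.mul x y :: w' ++ v₂,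
        Relation.ReflGen.single
          (red_one_of_eq (u := u₁ ++ M.mul x y :: w') (v := v₂) (by simp) (by simp)),
        Relation.ReflGen.single
          (red_mul_of_eq (u := u₁) (v := w' ++ v₂) h (by simp) (by simp))⟩
  · -- disjoint, one before mul
    subst hw1; subst hw2
    refine ⟨u₂ ++ w ++ M.mul x y :: v₁,
      Relation.ReflGen.single
        (red_one_of_eq (u := u₂) (v := w ++ M.mul x y :: v₁) (by simp) (by simp)),
      Relation.ReflGen.single
        (red_mul_of_eq (u := u₂ ++ w) (v := v₁) h (by simp) (by simp))⟩

/-- Strong local confluence. -/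
lemma strong_local
    (H : ∀ x y z : P, M.dom x y → M.dom y z → ¬ M.dom (M.mul x y) z →
        (M.mul x y = x ∧ M.mul y z = z))
    (a b c : List P) (hab : Red M a b) (hac : Red M a c) : J M b c := by
  rcases red_cases hab with ⟨u₁, v₁, x₁, y₁, h1, rfl, rfl⟩ | ⟨u₁, v₁, rfl, rfl⟩
  · rcases red_cases hac with ⟨u₂, v₂, x₂, y₂, h2, e, rfl⟩ | ⟨u₂, v₂, e, rfl⟩
    · -- mul / mul
      rcases decomp u₁ x₁ (y₁ :: v₁) u₂ x₂ (y₂ :: v₂) e with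
        ⟨rfl, rfl, hv⟩ | ⟨w, hw1, hw2⟩ | ⟨w, hw1, hw2⟩
      · obtain ⟨rfl, rfl⟩ : y₁ = y₂ ∧ v₁ = v₂ := by
          simpa using hv
        exact J_of_eq rfl
      · subst hw1; exact mulmul_shift H u₁ v₁ v₂ w x₁ y₁ x₂ y₂ h1 h2 hw2
      · subst hw1; exact J_symm (mulmul_shift H u₂ v₂ v₁ w x₂ y₂ x₁ y₁ h2 h1 hw2)
    · -- mul / one
      exact mulone u₁ v₁ u₂ v₂ x₁ y₁ h1 e
  · rcases red_cases hac with ⟨u₂, v₂, x₂, y₂, h2, e, rfl⟩ | ⟨u₂, v₂, e, rfl⟩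
    · -- one / mul
      exact J_symm (mulone u₂ v₂ u₁ v₁ x₂ y₂ h2 e.symm)
    · -- one / one
      rcases decomp u₁ M.one v₁ u₂ M.one v₂ e with
        ⟨rfl, -, rfl⟩ | ⟨w, hw1, hw2⟩ | ⟨w, hw1, hw2⟩
      · exact J_of_eq rfl
      · subst hw1; subst hw2
        exact ⟨u₁ ++ w ++ v₂,
          Relation.ReflGen.single
            (red_one_of_eq (u := u₁ ++ w) (v := v₂) (by simp) (by simp)),
          Relation.ReflGen.single
            (red_one_of_eq (u := u₁) (v := w ++ v₂) (by simp) (by simp))⟩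
      · subst hw1; subst hw2
        exact ⟨u₂ ++ w ++ v₁,
          Relation.ReflGen.single
            (red_one_of_eq (u := u₂) (v := w ++ v₁) (by simp) (by simp)),
          Relation.ReflGen.single
            (red_one_of_eq (u := u₂ ++ w) (v := v₁) (by simp) (by simp))⟩

/-- Any reduction step out of a two-letter word uses one of three possibilities. -/
lemma red_two {p q : P} {w : List P} (h : Red M [p, q] w) :
    M.dom p q ∨ p = M.one ∨ q = M.one := by
  rcases red_cases h with ⟨u, v, x, y, hxy, he, -⟩ | ⟨u, v, he, -⟩
  · rcases u with _ | ⟨c, _ | ⟨c', u⟩⟩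
    · simp only [List.nil_append, List.cons.injEq] at he
      obtain ⟨rfl, rfl, -⟩ := he
      exact Or.inl hxy
    · simp at he
    · have := congrArg List.length he
      simp at this
  · rcases u with _ | ⟨c, _ | ⟨c', u⟩⟩
    · simp only [List.nil_append, List.cons.injEq] at he
      exact Or.inr (Or.inl he.1)
    · simp only [List.cons_append, List.nil_append, List.cons.injEq] at he
      exact Or.inr (Or.inr he.2.1)
    · have := congrArg List.length he
      simp at this

lemma eq_of_rtg_two {p q : P} {d : List P}
    (hnd : ¬ M.dom p q) (hp : p ≠ M.one) (hq : q ≠ M.one)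
    (h : Relation.ReflTransGen (Red M) [p, q] d) : d = [p, q] := by
  rcases Relation.ReflTransGen.cases_head h with rfl | ⟨w, hw, -⟩
  · rfl
  · rcases red_two hw with h' | h' | h' <;> [exact absurd h' hnd;
      exact absurd h' hp; exact absurd h' hq]

end Aux

/-- `⇒_R` is confluent iff there is no essential critical pair of type (A0);
equivalently, iff every essential critical pair of type (A) is of type (A1):
whenever `(x,y) ∈ dom(×)`, `(y,z) ∈ dom(×)` and `(x×y, z) ∉ dom(×)`, one has
`x×y = x` and `y×z = z`. -/
theorem confluent_iff_no_type_A0_critical_pair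
    {P : Type*} (M : PartialMonoid P) :
    Confluent (Red M) ↔
      ∀ x y z : P, M.dom x y → M.dom y z → ¬ M.dom (M.mul x y) z →
        (M.mul x y = x ∧ M.mul y z = z) := by
  constructor
  · intro hc x y z hxy hyz hnd
    have hnd2 : ¬ M.dom x (M.mul y z) := fun h =>
      hnd (((M.dom_assoc x y z).2 ⟨hyz, h⟩).2)
    have ha1 : M.mul x y ≠ M.one := fun h => hnd (h ▸ M.dom_one_left z)
    have hz1 : z ≠ M.one := fun h => hnd (h ▸ M.dom_one_right (M.mul x y))
    have hx1 : x ≠ M.one := fun h => hnd2 (h ▸ M.dom_one_left (M.mul y z))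
    have hb1 : M.mul y z ≠ M.one := fun h => hnd2 (h ▸ M.dom_one_right x)
    have r1 : Red M [x, y, z] [M.mul x y, z] := Red.mul [] [z] x y hxy
    have r2 : Red M [x, y, z] [x, M.mul y z] := Red.mul [x] [] y z hyz
    obtain ⟨d, hd1, hd2⟩ := hc [x, y, z] [M.mul x y, z] [x, M.mul y z]
      (Relation.ReflTransGen.single r1) (Relation.ReflTransGen.single r2)
    have e1 : d = [M.mul x y, z] := eq_of_rtg_two hnd ha1 hz1 hd1
    have e2 : d = [x, M.mul y z] := eq_of_rtg_two hnd2 hx1 hb1 hd2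
    rw [e1] at e2
    simp only [List.cons.injEq, and_true] at e2
    exact ⟨e2.1, e2.2.symm⟩
  · intro H a b c hab hac
    exact Relation.church_rosser
      (fun a b c h1 h2 => by
        obtain ⟨d, hd1, hd2⟩ := strong_local H a b c h1 h2
        exact ⟨d, hd1, hd2.to_reflTransGen⟩)
      hab hac
end

section
/- Let P be a partial monoid and w a word over P∖{1_P}. Then: (1) the set of irreducible prefixes of w admits a maximum w_m with respect to the prefix order; (2) w_m = w if and only if w ∈ Irr(P); (3) if w ∉ Irr(P), then there is a unique 4-tuple (u,x,y,v), with u and v words over P∖{1_P} and x,y ∈ P∖{1_P}, such that w_m = u·x, w = u·x·y·v, and (x,y) ∈ dom(×). -/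
namespace List

variable {α : Type*} (R : α → α → Prop) [DecidableRel R]

def maxChainPrefix : List α → List α
  | [] => []
  | [x] => [x]
  | x :: y :: t => if R x y then x :: maxChainPrefix (y :: t) else [x]

variable {R}

theorem maxChainPrefix_prefix (l : List α) : maxChainPrefix R l <+: l := by
  fun_induction maxChainPrefix R l <;> simp_all [prefix_cons_iff]

theorem head?_maxChainPrefix (l : List α) : (maxChainPrefix R l).head? = l.head? := by
  fun_induction maxChainPrefix R l <;> simp_all

theorem isChain_maxChainPrefix (l : List α) : IsChain R (maxChainPrefix R l) := by
  fun_induction maxChainPrefix R l with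
  | case3 x y t hxy ih =>
    cases h : maxChainPrefix R (y :: t) with
    | nil => simp
    | cons z s =>
      have hz : z = y := by simpa [h] using head?_maxChainPrefix (R := R) (y :: t)
      exact isChain_cons_cons.mpr ⟨hz ▸ hxy, h ▸ ih⟩
  | _ => simp

theorem IsChain.prefix_maxChainPrefix {u l : List α} (hu : u <+: l) (hc : IsChain R u) :
    u <+: maxChainPrefix R l := by
  fun_induction maxChainPrefix R l generalizing u with
  | case1 | case2 => simpa using hu
  | case3 x y t _ ih =>
    obtain rfl | ⟨u, rfl, htail⟩ := prefix_cons_iff.mp hu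
    · exact nil_prefix
    · exact cons_prefix_cons.mpr ⟨rfl, ih htail hc.tail⟩
  | case4 x y t hxy =>
    rcases u with _ | ⟨_, _ | ⟨_, _⟩⟩
    · exact nil_prefix
    · exact (cons_prefix_cons.mp hu).1 ▸ prefix_refl _
    · obtain ⟨rfl, rfl, -⟩ : _ = x ∧ _ = y ∧ _ := by simpa using hu
      exact absurd (isChain_cons_cons.mp hc).1 hxy

theorem maxChainPrefix_eq_self_iff {l : List α} : maxChainPrefix R l = l ↔ IsChain R l :=
  ⟨fun h => h ▸ isChain_maxChainPrefix l,
    fun h => (maxChainPrefix_prefix l).eq_of_length_le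
      (h.prefix_maxChainPrefix (prefix_refl l)).length_le⟩

theorem exists_maxChainPrefix_eq_append_singleton {l : List α} (hl : ¬ IsChain R l) :
    ∃ u x y v, maxChainPrefix R l = u ++ [x] ∧ l = u ++ x :: y :: v ∧ ¬ R x y := by
  fun_induction maxChainPrefix R l with
  | case1 => simp at hl
  | case2 => simp at hl
  | case3 x y t hxy ih =>
    obtain ⟨u, x', y', v, h1, h2, h3⟩ := ih (by simpa [hxy] using hl)
    exact ⟨x :: u, x', y', v, by simp [h1], by simp [h2], h3⟩
  | case4 x y t hxy => exact ⟨[], x, y, t, rfl, rfl, hxy⟩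

end List

namespace PartialMonoid

variable {P : Type*} (M : PartialMonoid P)

theorem exists_red_iff {w : List P} :
    (∃ w', Red M w w') ↔ (∃ u x y v, w = u ++ x :: y :: v ∧ M.dom x y) ∨ M.one ∈ w := by
  constructor
  · rintro ⟨_, ⟨u, v, x, y, hxy⟩ | ⟨u, v⟩⟩
    · exact Or.inl ⟨u, x, y, v, rfl, hxy⟩
    · exact Or.inr (by simp)
  · rintro (⟨u, x, y, v, rfl, hxy⟩ | hone)
    · exact ⟨_, Red.mul u v x y hxy⟩
    · obtain ⟨u, v, rfl⟩ := List.append_of_mem hone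
      exact ⟨_, Red.one u v⟩

theorem irr_iff {w : List P} : Irr M w ↔ M.one ∉ w ∧ w.IsChain (fun x y => ¬ M.dom x y) := by
  rw [Irr, exists_red_iff, List.isChain_iff_forall_rel_of_append_cons_cons]
  push Not
  exact ⟨fun ⟨h, hone⟩ => ⟨hone, fun x y u v hw => h u x y v hw⟩,
    fun ⟨hone, h⟩ => ⟨fun u x y v hw => h hw, hone⟩⟩

end PartialMonoid

/-- For a word `w` over `P∖{1_P}`:
(1) the set of irreducible prefixes of `w` has a maximum `wₘ` for the prefix order;
(2) `wₘ = w` iff `w` is irreducible;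
(3) if `w` is not irreducible, there is a unique 4-tuple `(u,x,y,v)`, with `u,v` words
over `P∖{1_P}` and `x,y ∈ P∖{1_P}`, such that `wₘ = u·x`, `w = u·x·y·v` and
`(x,y) ∈ dom(×)`. -/
theorem max_irreducible_prefix {P : Type*} (M : PartialMonoid P)
    (w : List P) (hw : ∀ a ∈ w, a ≠ M.one) :
    ∃ wm : List P,
      (wm <+: w ∧ Irr M wm ∧ ∀ u : List P, u <+: w → Irr M u → u <+: wm) ∧
      (wm = w ↔ Irr M w) ∧
      (¬ Irr M w →
        ∃! t : List P × P × P × List P,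
          (∀ a ∈ t.1, a ≠ M.one) ∧ t.2.1 ≠ M.one ∧ t.2.2.1 ≠ M.one ∧
          (∀ a ∈ t.2.2.2, a ≠ M.one) ∧
          wm = t.1 ++ [t.2.1] ∧
          w = t.1 ++ t.2.1 :: t.2.2.1 :: t.2.2.2 ∧
          M.dom t.2.1 t.2.2.1) := by
  classical
  set R : P → P → Prop := fun x y => ¬ M.dom x y
  have irr_iff_of_prefix {u : List P} (hu : u <+: w) : Irr M u ↔ u.IsChain R := by
    rw [M.irr_iff]
    exact and_iff_right fun hone => hw _ (hu.subset hone) rfl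
  have irr_w_iff : Irr M w ↔ w.IsChain R := irr_iff_of_prefix (List.prefix_refl w)
  have hwm := List.maxChainPrefix_prefix (R := R) w
  refine ⟨w.maxChainPrefix R,
    ⟨hwm, (irr_iff_of_prefix hwm).2 (List.isChain_maxChainPrefix w),
      fun u hu hirr => ((irr_iff_of_prefix hu).1 hirr).prefix_maxChainPrefix hu⟩,
    List.maxChainPrefix_eq_self_iff.trans irr_w_iff.symm, fun hred => ?_⟩
  obtain ⟨u, x, y, v, hm, rfl, hxy⟩ :=
    List.exists_maxChainPrefix_eq_append_singleton (irr_w_iff.not.1 hred)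
  refine ⟨(u, x, y, v), ⟨fun a ha => hw a (by simp [ha]), hw x (by simp), hw y (by simp),
    fun a ha => hw a (by simp [ha]), hm, rfl, not_not.1 hxy⟩, ?_⟩
  rintro ⟨u', x', y', v'⟩ ⟨-, -, -, -, hm', hw', -⟩
  obtain ⟨rfl, rfl⟩ := List.append_singleton_inj.1 (hm'.symm.trans hm)
  obtain ⟨rfl, rfl⟩ : y' = y ∧ v' = v := by simpa using hw'.symm
  rfl
end

section
/- Let P be a partial monoid, and let u ∈ Irr(P) be a nonempty irreducible word of length n whose i-th letter (1 ≤ i ≤ n) is a right-invertible element x of P (there exists x' with (x,x') ∈ dom(×) and x × x' = 1_P). Then i = 1. Dually, if the i-th letter is left invertible (there exists x' with (x',x) ∈ dom(×) and x' × x = 1_P), then i = n. In particular, if the i-th letter x is invertible, then u is the one-letter word x. -/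

lemma split_at {P : Type*} (u : List P) (j : ℕ) (h : j + 1 < u.length) :
    u = u.take j ++ u[j] :: u[j+1] :: u.drop (j+2) := by
  have h1 : j < u.length := by omega
  conv_lhs => rw [← List.take_append_drop j u]
  congr 1
  rw [List.drop_eq_getElem_cons h1, List.drop_eq_getElem_cons h]

lemma no_adjacent {P : Type*} (M : PartialMonoid P) (u : List P) (hu : Irr M u)
    (j : ℕ) (h : j + 1 < u.length) (hd : M.dom (u[j]'(by omega)) (u[j+1]'h)) : False := by
  apply hu
  refine ⟨u.take j ++ M.mul (u[j]'(by omega)) (u[j+1]'h) :: u.drop (j+2), ?_⟩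
  conv_lhs => rw [split_at u j h]
  exact Red.mul _ _ _ _ hd

/-- In a nonempty irreducible word `u`, a right-invertible letter can only occur in
first position, a left-invertible letter can only occur in last position, and if some
letter `x` is invertible then `u` is the one-letter word `x`.
(Positions are numbered from `0` here, so `i = 0` corresponds to the first letter and
`i = |u| - 1` to the last one.) -/
theorem invertible_letter_position {P : Type*} (M : PartialMonoid P)
    (u : List P) (hu : Irr M u) (hne : u ≠ []) (i : ℕ) (hi : i < u.length) :
    ((∃ x', M.dom (u[i]'hi) x' ∧ M.mul (u[i]'hi) x' = M.one) → i = 0) ∧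
    ((∃ x', M.dom x' (u[i]'hi) ∧ M.mul x' (u[i]'hi) = M.one) → i = u.length - 1) ∧
    (((∃ x', M.dom (u[i]'hi) x' ∧ M.mul (u[i]'hi) x' = M.one) ∧
      (∃ x', M.dom x' (u[i]'hi) ∧ M.mul x' (u[i]'hi) = M.one)) → u = [u[i]'hi]) := by
  have hlen : 0 < u.length := List.length_pos_iff.mpr hne
  have h1 : (∃ x', M.dom (u[i]'hi) x' ∧ M.mul (u[i]'hi) x' = M.one) → i = 0 := by
    rintro ⟨x', hd, hm⟩
    by_contra h0
    obtain ⟨k, rfl⟩ : ∃ k, i = k + 1 := ⟨i - 1, by omega⟩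
    have hdom : M.dom (u[k]'(by omega)) (u[k+1]'hi) := by
      have := (M.dom_assoc (u[k]'(by omega)) (u[k+1]'hi) x').mpr
        ⟨hd, by rw [hm]; exact M.dom_one_right _⟩
      exact this.1
    exact no_adjacent M u hu k hi hdom
  have h2 : (∃ x', M.dom x' (u[i]'hi) ∧ M.mul x' (u[i]'hi) = M.one) → i = u.length - 1 := by
    rintro ⟨x', hd, hm⟩
    by_contra h0
    have hi1 : i + 1 < u.length := by omega
    have hdom : M.dom (u[i]'hi) (u[i+1]'hi1) := by
      have := (M.dom_assoc x' (u[i]'hi) (u[i+1]'hi1)).mp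
        ⟨hd, by rw [hm]; exact M.dom_one_left _⟩
      exact this.1
    exact no_adjacent M u hu i hi1 hdom
  refine ⟨h1, h2, fun ⟨ha, hb⟩ => ?_⟩
  have e1 := h1 ha
  have e2 := h2 hb
  have : u.length = 1 := by omega
  obtain ⟨a, rfl⟩ := List.length_eq_one_iff.mp this
  subst e1
  rfl
end

section
/- Let P be a partial monoid and let w be a word over P∖{1_P} that is not irreducible, with left-standard decomposition lstd(w) = (u,x,y,v). If x × y = 1_P, then u is the empty word; in particular the maximal irreducible prefix of w is the one-letter word x, and the set of irreducible prefixes of w is exactly {ε, x}. -/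
/-!
If `x × y = 1`, then by associativity of the domain `(a, x)` is composable for every letter `a`,
since `(x, y)` and `(a, x × y) = (a, 1)` are. So a letter before `x` would form a composable pair
with `x` to the left of `(x, y)`: hence `u = ε`. An irreducible prefix of `x·y·v` cannot contain
the composable factor `x·y`, so it is `ε` or `x`.
-/

namespace PartialMonoid

variable {P : Type*} (M : PartialMonoid P)

theorem dom_left_of_mul_eq_one {x y : P} (hxy : M.dom x y) (h : M.mul x y = M.one) (a : P) :
    M.dom a x :=
  ((M.dom_assoc a x y).2 ⟨hxy, h ▸ M.dom_one_right a⟩).1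

end PartialMonoid

theorem List.eq_nil_of_isChain_append_singleton {α : Type*} {R : α → α → Prop} {u : List α}
    {x : α} (h : (u ++ [x]).IsChain R) (hx : ∀ a, ¬ R a x) : u = [] := by
  by_contra hu
  exact hx _ (h.rel_getLast_head_of_append hu (List.cons_ne_nil x []))

section Irr

variable {P : Type*} (M : PartialMonoid P)

theorem Red.two_le_length_or_one_mem {w w' : List P} (h : Red M w w') :
    2 ≤ w.length ∨ M.one ∈ w := by
  cases h with
  | mul => exact Or.inl (by simp only [List.length_append, List.length_cons]; omega)
  | one => exact Or.inr (by simp)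

theorem irr_nil : Irr M [] :=
  fun ⟨_, h⟩ => by simpa using h.two_le_length_or_one_mem

theorem irr_singleton {a : P} (ha : a ≠ M.one) : Irr M [a] :=
  fun ⟨_, h⟩ => by simpa [eq_comm, ha] using h.two_le_length_or_one_mem

theorem not_irr_cons_cons {a b : P} (l : List P) (h : M.dom a b) : ¬ Irr M (a :: b :: l) :=
  fun hirr => hirr ⟨_, Red.mul [] l a b h⟩

theorem prefix_and_irr_iff_of_dom {x y : P} (v : List P) (hxy : M.dom x y) (hx : x ≠ M.one)
    (p : List P) : (p <+: x :: y :: v ∧ Irr M p) ↔ p = [] ∨ p = [x] := by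
  constructor
  · rintro ⟨hp, hirr⟩
    match p with
    | [] => exact Or.inl rfl
    | [b] => exact Or.inr (by rw [(List.cons_prefix_cons.1 hp).1])
    | b :: c :: q =>
      simp only [List.cons_prefix_cons] at hp
      obtain ⟨rfl, rfl, -⟩ := hp
      exact absurd hirr (not_irr_cons_cons M q hxy)
  · rintro (rfl | rfl)
    · exact ⟨List.nil_prefix, irr_nil M⟩
    · exact ⟨⟨y :: v, rfl⟩, irr_singleton M hx⟩

end Irr

theorem lstd_of_mul_eq_one_general {P : Type*} (M : PartialMonoid P)
    (w u v : List P) (x y : P)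
    (hw : ∀ a ∈ w, a ≠ M.one)
    (hdec : w = u ++ x :: y :: v) (hdom : M.dom x y)
    (hleft : List.Chain' (fun a b => ¬ M.dom a b) (u ++ [x]))
    (hone : M.mul x y = M.one) :
    u = [] ∧
    ([x] <+: w ∧ Irr M [x] ∧ ∀ p : List P, p <+: w → Irr M p → p <+: [x]) ∧
    (∀ p : List P, (p <+: w ∧ Irr M p) ↔ (p = [] ∨ p = [x])) := by
  have hx : x ≠ M.one := hw x (by simp [hdec])
  have hu : u = [] := List.eq_nil_of_isChain_append_singleton hleft
    fun a hax => hax (M.dom_left_of_mul_eq_one hdom hone a)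
  subst hu hdec
  have hirr := prefix_and_irr_iff_of_dom M v hdom hx
  refine ⟨rfl, ⟨⟨y :: v, rfl⟩, ((hirr [x]).2 (Or.inr rfl)).2, fun p hp hp' => ?_⟩, hirr⟩
  rcases (hirr p).1 ⟨hp, hp'⟩ with rfl | rfl
  · exact List.nil_prefix
  · exact List.prefix_refl [x]

/-- Let `w` be a non-irreducible word over `P∖{1_P}` with left-standard decomposition
`lstd(w) = (u,x,y,v)`, i.e. `w = u·x·y·v`, `(x,y) ∈ dom(×)`, and `(x,y)` is the
leftmost composable pair of consecutive letters (no two consecutive letters of `u·x`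
are composable). If `x×y = 1_P` then `u = ε`; in particular the maximal irreducible
prefix of `w` is the one-letter word `x` and the set of irreducible prefixes of `w`
is exactly `{ε, x}`. -/
theorem lstd_of_mul_eq_one {P : Type*} (M : PartialMonoid P)
    (w u v : List P) (x y : P)
    (hw : ∀ a ∈ w, a ≠ M.one) (hnirr : ¬ Irr M w)
    (hdec : w = u ++ x :: y :: v) (hdom : M.dom x y)
    (hleft : List.Chain' (fun a b => ¬ M.dom a b) (u ++ [x]))
    (hone : M.mul x y = M.one) :
    u = [] ∧
    ([x] <+: w ∧ Irr M [x] ∧ ∀ p : List P, p <+: w → Irr M p → p <+: [x]) ∧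
    (∀ p : List P, (p <+: w ∧ Irr M p) ↔ (p = [] ∨ p = [x])) :=
  lstd_of_mul_eq_one_general M w u v x y hw hdec hdom hleft hone
end

section
/- Let P be a partial monoid and let lstd : P* → Irr(P) be the map sending each word over P to its unique normal form under the left standard reduction lst(R). Then for all words u, v over P, lstd(lstd(u)·v) = lstd(u·v). -/
/-- The left standard reduction `lst(R)` on words over `P`:
(i) erase an occurrence of `1_P`;
(ii) for a non-irreducible word over `P∖{1_P}` whose leftmost composable pair `(x,y)`
occurs at the start and satisfies `x×y = 1_P`, erase the factor `x·y`;
(iii) for a non-irreducible word `u·x·y·v` over `P∖{1_P}` whose leftmost composable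
pair is `(x,y)` (no two consecutive letters of `u·x` are composable) with
`x×y ≠ 1_P`, contract the factor `x·y` to `x×y`. -/
inductive LstRed {P : Type*} (M : PartialMonoid P) : List P → List P → Prop
  | erase (u v : List P) : LstRed M (u ++ M.one :: v) (u ++ v)
  | cancel (x y : P) (v : List P)
      (hno : ∀ a ∈ x :: y :: v, a ≠ M.one)
      (hdom : M.dom x y) (hone : M.mul x y = M.one) :
      LstRed M (x :: y :: v) v
  | contract (u : List P) (x y : P) (v : List P)
      (hno : ∀ a ∈ u ++ x :: y :: v, a ≠ M.one)
      (hdom : M.dom x y) (hone : M.mul x y ≠ M.one)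
      (hleft : List.Chain' (fun a b => ¬ M.dom a b) (u ++ [x])) :
      LstRed M (u ++ x :: y :: v) (u ++ M.mul x y :: v)

open Relation List

section Aux

variable {P : Type*} (M : PartialMonoid P)

/-- Remove all occurrences of `M.one` from a word. -/
noncomputable def strip : List P → List P
  | [] => []
  | a :: t => @ite _ (a = M.one) (Classical.dec _) (strip t) (a :: strip t)

lemma strip_noOne : ∀ (v : List P), ∀ a ∈ strip M v, a ≠ M.one := by
  intro v
  induction v with
  | nil => simp [strip]
  | cons b t ih =>
    intro a ha
    rw [strip] at ha
    split_ifs at ha with hb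
    · exact ih a ha
    · rcases List.mem_cons.mp ha with rfl | ha
      · exact hb
      · exact ih a ha

lemma strip_steps : ∀ (v t : List P),
    Relation.ReflTransGen (LstRed M) (t ++ v) (t ++ strip M v)
  | [], t => by
    simp only [strip, append_nil]
    exact ReflTransGen.refl
  | b :: w, t => by
    by_cases hb : b = M.one
    · subst hb
      refine ReflTransGen.head (LstRed.erase t w) ?_
      simpa [strip] using strip_steps w t
    · have := strip_steps w (t ++ [b])
      simpa [strip, hb] using this

variable {M}

/-- Inversion for `LstRed`. -/
lemma lstRed_cases {w b : List P} (h : LstRed M w b) :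
    (∃ u v, w = u ++ M.one :: v ∧ b = u ++ v) ∨
    ((∀ a ∈ w, a ≠ M.one) ∧ ∃ u x y v, w = u ++ x :: y :: v ∧ M.dom x y ∧
      List.Chain' (fun a b => ¬ M.dom a b) (u ++ [x]) ∧
      ((M.mul x y = M.one ∧ u = [] ∧ b = v) ∨
        (M.mul x y ≠ M.one ∧ b = u ++ M.mul x y :: v))) := by
  cases h with
  | erase u v => exact Or.inl ⟨u, v, rfl, rfl⟩
  | cancel x y v hno hdom hone =>
    exact Or.inr ⟨hno, [], x, y, _, rfl, hdom, List.isChain_singleton x,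
      Or.inl ⟨hone, rfl, rfl⟩⟩
  | contract u x y v hno hdom hone hleft =>
    exact Or.inr ⟨hno, u, x, y, v, rfl, hdom, hleft, Or.inr ⟨hone, rfl⟩⟩

lemma chain_absurd {x y : P} {v : List P} (hdom : M.dom x y) :
    ∀ (u' : List P) (x' : P) (l : List P), x :: y :: v = u' ++ x' :: l →
    List.Chain' (fun a b => ¬ M.dom a b) (u' ++ [x']) → u' = [] := by
  rintro (_ | ⟨a0, u0⟩) x' l heq hch
  · rfl
  · exfalso
    simp only [cons_append, cons.injEq] at heq
    obtain ⟨rfl, heq⟩ := heq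
    cases u0 with
    | nil =>
      simp only [nil_append, cons.injEq] at heq
      obtain ⟨rfl, -⟩ := heq
      exact (List.isChain_cons_cons.mp hch).1 hdom
    | cons b u1 =>
      simp only [cons_append, cons.injEq] at heq
      obtain ⟨rfl, -⟩ := heq
      exact (List.isChain_cons_cons.mp hch).1 hdom

lemma contract_eq : ∀ (u : List P) {x y : P} {v : List P} (u' : List P) {x' y' : P} {v' : List P},
    u ++ x :: y :: v = u' ++ x' :: y' :: v' →
    M.dom x y → M.dom x' y' →
    List.Chain' (fun a b => ¬ M.dom a b) (u ++ [x]) →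
    List.Chain' (fun a b => ¬ M.dom a b) (u' ++ [x']) →
    u = u' ∧ x = x' ∧ y = y' ∧ v = v' := by
  intro u
  induction u with
  | nil =>
    intro x y v u' x' y' v' heq hd hd' hc hc'
    have : u' = [] := chain_absurd hd u' x' (y' :: v') (by simpa using heq) hc'
    subst this
    simp only [nil_append, cons.injEq] at heq
    obtain ⟨rfl, rfl, rfl⟩ := heq
    exact ⟨rfl, rfl, rfl, rfl⟩
  | cons a0 u0 ih =>
    intro x y v u' x' y' v' heq hd hd' hc hc'
    cases u' with
    | nil =>
      have : a0 :: u0 = [] :=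
        chain_absurd hd' (a0 :: u0) x (y :: v) (by simpa using heq.symm) hc
      exact absurd this (by simp)
    | cons a0' u0' =>
      simp only [cons_append, cons.injEq] at heq
      obtain ⟨rfl, heq⟩ := heq
      obtain ⟨h1, h2, h3, h4⟩ := ih u0' heq hd hd' hc.tail hc'.tail
      exact ⟨by rw [h1], h2, h3, h4⟩

/-- Determinism of left standard reduction on one-free words. -/
lemma lst_det {w b c : List P} (hno : ∀ a ∈ w, a ≠ M.one)
    (h1 : LstRed M w b) (h2 : LstRed M w c) : b = c := by
  rcases lstRed_cases h1 with ⟨u, v, rfl, -⟩ | ⟨-, u, x, y, v, rfl, hd, hc, hb⟩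
  · exact absurd rfl (hno M.one (by simp))
  rcases lstRed_cases h2 with ⟨u', v', heq, -⟩ | ⟨-, u', x', y', v', heq, hd', hc', hb'⟩
  · exact absurd rfl (hno M.one (heq ▸ (by simp)))
  obtain ⟨rfl, rfl, rfl, rfl⟩ := contract_eq u u' heq hd hd' hc hc'
  rcases hb with ⟨ho, rfl, rfl⟩ | ⟨ho, rfl⟩ <;>
    rcases hb' with ⟨ho', heq', rfl⟩ | ⟨ho', rfl⟩
  · rfl
  · exact absurd ho ho'
  · exact absurd ho' ho
  · rfl

lemma erase_join_aux (u v t v' : List P) (h2 : M.one :: v = t ++ M.one :: v') :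
    ∃ d, ReflGen (LstRed M) (u ++ v) d ∧ ReflGen (LstRed M) ((u ++ t) ++ v') d := by
  cases t with
  | nil =>
    simp only [nil_append, cons.injEq, true_and] at h2
    refine ⟨u ++ v', ?_, ?_⟩
    · rw [h2]
    · rw [append_nil]
  | cons h0 t' =>
    simp only [cons_append, cons.injEq] at h2
    obtain ⟨hh, hv⟩ := h2
    refine ⟨u ++ (t' ++ v'), ?_, ?_⟩
    · rw [hv]
      exact ReflGen.single
        (by simpa [append_assoc] using LstRed.erase (M := M) (u ++ t') v')
    · rw [← hh]
      exact ReflGen.single (by simpa [append_assoc] using LstRed.erase (M := M) u (t' ++ v'))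

lemma erase_join (u v u' v' : List P) (h : u ++ M.one :: v = u' ++ M.one :: v') :
    ∃ d, ReflGen (LstRed M) (u ++ v) d ∧ ReflGen (LstRed M) (u' ++ v') d := by
  rcases List.append_eq_append_iff.mp h with ⟨t, h1, h2⟩ | ⟨t, h1, h2⟩
  · obtain ⟨d, hd1, hd2⟩ := erase_join_aux u v t v' h2
    rw [h1]
    exact ⟨d, hd1, hd2⟩
  · obtain ⟨d, hd1, hd2⟩ := erase_join_aux u' v' t v h2
    rw [h1]
    exact ⟨d, hd2, hd1⟩

lemma lst_diamond : ∀ (a b c : List P), LstRed M a b → LstRed M a c →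
    ∃ d, ReflGen (LstRed M) b d ∧ ReflTransGen (LstRed M) c d := by
  intro a b c h1 h2
  rcases Classical.em (∀ x ∈ a, x ≠ M.one) with hno | hyes
  · exact ⟨b, ReflGen.refl, by rw [lst_det hno h1 h2]⟩
  rcases lstRed_cases h1 with ⟨u, v, rfl, rfl⟩ | ⟨hno1, -⟩
  swap
  · exact absurd hno1 hyes
  rcases lstRed_cases h2 with ⟨u', v', heq, rfl⟩ | ⟨hno2, -⟩
  swap
  · exact absurd hno2 hyes
  obtain ⟨d, hd1, hd2⟩ := erase_join u v u' v' heq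
  exact ⟨d, hd1, hd2.to_reflTransGen⟩

lemma lst_equiv : Equivalence (Join (ReflTransGen (LstRed M))) :=
  Relation.equivalence_join_reflTransGen lst_diamond

lemma step_append {a b : List P} (h : LstRed M a b) (v : List P) :
    Join (ReflTransGen (LstRed M)) (a ++ v) (b ++ v) := by
  rcases lstRed_cases h with ⟨u, w, ha, hbw⟩ | ⟨hno, u, x, y, w, ha, hdom, hleft, hb⟩
  · rw [ha, hbw]
    refine ⟨(u ++ w) ++ v, ReflTransGen.single ?_, ReflTransGen.refl⟩
    simpa [append_assoc] using LstRed.erase (M := M) u (w ++ v)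
  rcases hb with ⟨hone, hu, hbw⟩ | ⟨hone, hbw⟩
  · -- cancel case
    rw [ha, hbw, hu]
    refine ⟨w ++ strip M v, ?_, ?_⟩
    · refine ReflTransGen.tail (strip_steps M v (x :: y :: w)) ?_
      have hno' : ∀ a ∈ x :: y :: (w ++ strip M v), a ≠ M.one := by
          intro a hax
          simp only [mem_cons, mem_append] at hax
          rcases hax with rfl | rfl | hax | hax
          · exact hno a (by rw [ha, hu]; simp)
          · exact hno a (by rw [ha, hu]; simp)
          · exact hno a (by rw [ha, hu]; simp [hax])
          · exact strip_noOne M v a hax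
      exact (by simpa [append_assoc] using
        LstRed.cancel x y (w ++ strip M v) hno' hdom hone :
        LstRed M ((x :: y :: w) ++ strip M v) (w ++ strip M v))
    · exact strip_steps M v w
  · -- contract case
    rw [ha, hbw]
    refine ⟨u ++ M.mul x y :: (w ++ strip M v), ?_, ?_⟩
    · refine ReflTransGen.tail (strip_steps M v (u ++ x :: y :: w)) ?_
      have hno' : ∀ a ∈ u ++ x :: y :: (w ++ strip M v), a ≠ M.one := by
          intro a hax
          simp only [mem_append, mem_cons] at hax
          rcases hax with hax | rfl | rfl | hax | hax
          · exact hno a (by rw [ha]; simp [hax])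
          · exact hno a (by rw [ha]; simp)
          · exact hno a (by rw [ha]; simp)
          · exact hno a (by rw [ha]; simp [hax])
          · exact strip_noOne M v a hax
      exact (by simpa [append_assoc] using
        LstRed.contract u x y (w ++ strip M v) hno' hdom hone hleft :
        LstRed M ((u ++ x :: y :: w) ++ strip M v)
          (u ++ M.mul x y :: (w ++ strip M v)))
    · simpa [append_assoc] using strip_steps M v (u ++ M.mul x y :: w)

lemma rtg_append_join {a b : List P} (h : ReflTransGen (LstRed M) a b) (v : List P) :
    Join (ReflTransGen (LstRed M)) (a ++ v) (b ++ v) := by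
  induction h with
  | refl => exact lst_equiv.refl _
  | tail _ hstep ih => exact lst_equiv.trans ih (step_append hstep v)

lemma nf_of_rtg {b d : List P} (h : ReflTransGen (LstRed M) b d)
    (hb : ¬ ∃ w', LstRed M b w') : b = d := by
  rcases (ReflTransGen.cases_head h) with rfl | ⟨e, he, -⟩
  · rfl
  · exact absurd ⟨e, he⟩ hb

end Aux

/-- Let `lstd` send each word over `P` to its (unique) normal form under left
standard reduction. Then `lstd(lstd(u)·v) = lstd(u·v)` for all words `u, v`. -/
theorem lstd_append {P : Type*} (M : PartialMonoid P)
    (lstd : List P → List P)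
    (hlstd : ∀ w : List P,
      Relation.ReflTransGen (LstRed M) w (lstd w) ∧ ¬ ∃ w', LstRed M (lstd w) w')
    (u v : List P) :
    lstd (lstd u ++ v) = lstd (u ++ v) := by
  have e := lst_equiv (M := M)
  have h1 : Join (ReflTransGen (LstRed M)) (u ++ v) (lstd u ++ v) :=
    rtg_append_join (hlstd u).1 v
  have h2 : Join (ReflTransGen (LstRed M)) (lstd u ++ v) (lstd (lstd u ++ v)) :=
    ⟨lstd (lstd u ++ v), (hlstd _).1, ReflTransGen.refl⟩
  have h3 : Join (ReflTransGen (LstRed M)) (u ++ v) (lstd (u ++ v)) :=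
    ⟨lstd (u ++ v), (hlstd _).1, ReflTransGen.refl⟩
  have hj : Join (ReflTransGen (LstRed M)) (lstd (lstd u ++ v)) (lstd (u ++ v)) :=
    e.trans (e.symm h2) (e.trans (e.symm h1) h3)
  obtain ⟨d, hd1, hd2⟩ := hj
  rw [nf_of_rtg hd1 (hlstd _).2, nf_of_rtg hd2 (hlstd _).2]
end

section
/- Let P be a partial monoid, let ⋆ be the operation on Irr(P) given by u ⋆ v = lstd(u·v), and let ev : FreeMagma(Irr(P)) → Irr(P) be the unique magma homomorphism extending the identity on Irr(P) (where Irr(P) is regarded as a magma under ⋆). Let ⇒_Ass be the rewriting relation on FreeMagma(Irr(P)) that rewrites any subterm of the form (t₁·t₂)·t₃ to t₁·(t₂·t₃), and ⇒*_Ass its reflexive-transitive closure. Then for all t₁, t₂ ∈ FreeMagma(Irr(P)), if t₁ ⇒*_Ass t₂ then ev(t₁) ⇔*_R ev(t₂). -/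
/-- One-step associativity rewriting on the free magma: rewrite any subterm of the
form `(t₁·t₂)·t₃` to `t₁·(t₂·t₃)`. -/
inductive AssStep {X : Type*} : FreeMagma X → FreeMagma X → Prop
  | assoc (t₁ t₂ t₃ : FreeMagma X) : AssStep (t₁ * t₂ * t₃) (t₁ * (t₂ * t₃))
  | mul_left {t₁ t₂ : FreeMagma X} (t : FreeMagma X) :
      AssStep t₁ t₂ → AssStep (t₁ * t) (t₂ * t)
  | mul_right {t₁ t₂ : FreeMagma X} (t : FreeMagma X) :
      AssStep t₁ t₂ → AssStep (t * t₁) (t * t₂)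

private lemma red_append_left {P : Type*} (M : PartialMonoid P) {a b : List P} (w : List P)
    (h : Red M a b) : Red M (w ++ a) (w ++ b) := by
  cases h with
  | mul u v x y hd =>
    simpa [List.append_assoc] using Red.mul (M := M) (w ++ u) v x y hd
  | one u v =>
    simpa [List.append_assoc] using Red.one (M := M) (w ++ u) v

private lemma red_append_right {P : Type*} (M : PartialMonoid P) {a b : List P} (w : List P)
    (h : Red M a b) : Red M (a ++ w) (b ++ w) := by
  cases h with
  | mul u v x y hd =>
    simpa [List.append_assoc] using Red.mul (M := M) u (v ++ w) x y hd
  | one u v =>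
    simpa [List.append_assoc] using Red.one (M := M) u (v ++ w)

private lemma eqv_append_left {P : Type*} (M : PartialMonoid P) {a b : List P} (w : List P)
    (h : Relation.EqvGen (Red M) a b) :
    Relation.EqvGen (Red M) (w ++ a) (w ++ b) := by
  induction h with
  | rel x y hxy => exact Relation.EqvGen.rel _ _ (red_append_left M w hxy)
  | refl x => exact Relation.EqvGen.refl _
  | symm x y _ ih => exact ih.symm _ _
  | trans x y z _ _ ih₁ ih₂ => exact ih₁.trans _ _ _ ih₂

private lemma eqv_append_right {P : Type*} (M : PartialMonoid P) {a b : List P} (w : List P)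
    (h : Relation.EqvGen (Red M) a b) :
    Relation.EqvGen (Red M) (a ++ w) (b ++ w) := by
  induction h with
  | rel x y hxy => exact Relation.EqvGen.rel _ _ (red_append_right M w hxy)
  | refl x => exact Relation.EqvGen.refl _
  | symm x y _ ih => exact ih.symm _ _
  | trans x y z _ _ ih₁ ih₂ => exact ih₁.trans _ _ _ ih₂

private lemma eqv_append {P : Type*} (M : PartialMonoid P) {a b c d : List P}
    (h₁ : Relation.EqvGen (Red M) a b) (h₂ : Relation.EqvGen (Red M) c d) :
    Relation.EqvGen (Red M) (a ++ c) (b ++ d) :=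
  (eqv_append_right M c h₁).trans _ _ _ (eqv_append_left M b h₂)

private lemma lstRed_to_red {P : Type*} (M : PartialMonoid P) {a b : List P}
    (h : LstRed M a b) : Relation.ReflTransGen (Red M) a b := by
  cases h with
  | erase u v => exact Relation.ReflTransGen.single (Red.one u v)
  | cancel x y v hno hdom hone =>
    refine Relation.ReflTransGen.head (by simpa using Red.mul (M := M) [] _ x y hdom) ?_
    refine Relation.ReflTransGen.single ?_
    rw [hone]
    simpa using Red.one (M := M) [] _
  | contract u x y v hno hdom hone hleft =>
    exact Relation.ReflTransGen.single (Red.mul u v x y hdom)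

private lemma rtg_to_eqv {α : Type*} {r : α → α → Prop} {a b : α}
    (h : Relation.ReflTransGen r a b) : Relation.EqvGen r a b := by
  induction h with
  | refl => exact Relation.EqvGen.refl _
  | tail _ hs ih => exact ih.trans _ _ _ (Relation.EqvGen.rel _ _ hs)

private lemma eqv_of_lstRedStar {P : Type*} (M : PartialMonoid P) {a b : List P}
    (h : Relation.ReflTransGen (LstRed M) a b) : Relation.EqvGen (Red M) a b := by
  induction h with
  | refl => exact Relation.EqvGen.refl _
  | tail _ hstep ih => exact ih.trans _ _ _ (rtg_to_eqv (lstRed_to_red M hstep))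

/-- Let `lstd` send each word to its unique `lst(R)`-normal form, let `⋆` be the
operation `u ⋆ v = lstd(u·v)` on `Irr(P)`, and let `ev` be the unique magma morphism
`FreeMagma(Irr(P)) → (Irr(P), ⋆)` extending the identity. If `t₁ ⇒*_Ass t₂`, then
`ev(t₁) ⇔*_R ev(t₂)` (the Thue congruence generated by `⇒_R`). -/
theorem eval_eqv_of_assStep {P : Type*} (M : PartialMonoid P)
    (lstd : List P → List P)
    (hlstd : ∀ w : List P,
      Relation.ReflTransGen (LstRed M) w (lstd w) ∧ ¬ ∃ w', LstRed M (lstd w) w')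
    (ev : FreeMagma {w : List P // Irr M w} → {w : List P // Irr M w})
    (hof : ∀ x : {w : List P // Irr M w}, ev (FreeMagma.of x) = x)
    (hmul : ∀ t₁ t₂ : FreeMagma {w : List P // Irr M w},
      (ev (t₁ * t₂)).val = lstd ((ev t₁).val ++ (ev t₂).val))
    (t₁ t₂ : FreeMagma {w : List P // Irr M w})
    (h : Relation.ReflTransGen AssStep t₁ t₂) :
    Relation.EqvGen (Red M) (ev t₁).val (ev t₂).val := by
  have hw : ∀ w : List P, Relation.EqvGen (Red M) (lstd w) w := fun w =>
    (eqv_of_lstRedStar M (hlstd w).1).symm _ _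
  have key : ∀ s s' : FreeMagma {w : List P // Irr M w}, AssStep s s' →
      Relation.EqvGen (Red M) (ev s).val (ev s').val := by
    intro s s' hs
    induction hs with
    | assoc a b c =>
      rw [hmul (a * b) c, hmul a (b * c), hmul a b, hmul b c]
      refine (hw _).trans _ _ _ ?_
      refine Relation.EqvGen.trans _ _ _ ?_ (hw _).symm
      refine (eqv_append_right M _ (hw ((ev a).val ++ (ev b).val))).trans _ _ _ ?_
      rw [List.append_assoc]
      exact eqv_append_left M _ (hw ((ev b).val ++ (ev c).val)).symm
    | mul_left t _ ih =>
      rw [hmul, hmul]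
      refine (hw _).trans _ _ _ ?_
      refine Relation.EqvGen.trans _ _ _ ?_ (hw _).symm
      exact eqv_append_right M _ ih
    | mul_right t _ ih =>
      rw [hmul, hmul]
      refine (hw _).trans _ _ _ ?_
      refine Relation.EqvGen.trans _ _ _ ?_ (hw _).symm
      exact eqv_append_left M _ ih
  induction h with
  | refl => exact Relation.EqvGen.refl _
  | tail _ hstep ih => exact ih.trans _ _ _ (key _ _ hstep)
end

section
/- Let P be a partial monoid and let ⋆ be the operation on Irr(P) given by u ⋆ v = lstd(u·v). Then ⋆ is associative (i.e. (u ⋆ v) ⋆ w = u ⋆ (v ⋆ w) for all u, v, w ∈ Irr(P)) if and only if the semi-Thue system R_P is confluent. -/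
open Relation List

theorem List.length_le_of_append_cons_cons_eq {α : Type*} {R : α → α → Prop}
    {u u' v v' : List α} {x y x' y' : α} (h : u ++ x :: y :: v = u' ++ x' :: y' :: v')
    (hxy : R x y) (hchain' : (u' ++ [x']).IsChain (fun a b => ¬ R a b)) :
    u'.length ≤ u.length := by
  by_contra! hlt
  have h₁ : u ++ [x, y] <+: u ++ x :: y :: v := ⟨v, by simp⟩
  have h₂ : u' ++ [x'] <+: u ++ x :: y :: v := ⟨y' :: v', by simp [h]⟩
  have hpre := prefix_of_prefix_length_le h₁ h₂ (by simp; omega)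
  exact isChain_pair.mp ((hchain'.prefix hpre).suffix ⟨u, rfl⟩) hxy

theorem List.eq_of_append_cons_cons_eq_of_isChain {α : Type*} {R : α → α → Prop}
    {u u' v v' : List α} {x y x' y' : α} (h : u ++ x :: y :: v = u' ++ x' :: y' :: v')
    (hxy : R x y) (hchain : (u ++ [x]).IsChain (fun a b => ¬ R a b))
    (hxy' : R x' y') (hchain' : (u' ++ [x']).IsChain (fun a b => ¬ R a b)) :
    u = u' ∧ x = x' ∧ y = y' ∧ v = v' := by
  obtain ⟨rfl, htail⟩ := append_inj h <| le_antisymm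
    (length_le_of_append_cons_cons_eq h.symm hxy' hchain)
    (length_le_of_append_cons_cons_eq h hxy hchain')
  simpa using htail

theorem PartialMonoid.dom_of_mul_eq_one {P : Type*} (M : PartialMonoid P) {x y z : P}
    (hyz : M.dom y z) (h : M.mul y z = M.one) : M.dom x y :=
  ((M.dom_assoc x y z).mpr ⟨hyz, h ▸ M.dom_one_right x⟩).1

section

variable {P : Type*} {M : PartialMonoid P}

theorem Red.append_append {a b : List P} (s t : List P) (h : Red M a b) :
    Red M (s ++ a ++ t) (s ++ b ++ t) := by
  cases h with
  | mul u v x y hxy => simpa using Red.mul (s ++ u) (v ++ t) x y hxy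
  | one u v => simpa using Red.one (s ++ u) (v ++ t)

theorem reflTransGen_red_append_append {a b : List P} (s t : List P)
    (h : ReflTransGen (Red M) a b) : ReflTransGen (Red M) (s ++ a ++ t) (s ++ b ++ t) :=
  h.lift (fun w => s ++ w ++ t) fun _ _ => Red.append_append s t

theorem irr_iff {w : List P} :
    Irr M w ↔ M.one ∉ w ∧ w.IsChain (fun a b => ¬ M.dom a b) := by
  rw [isChain_iff_forall_rel_of_append_cons_cons]
  constructor
  · intro h
    refine ⟨fun hone => h ?_, fun x y u v hw hxy => h ⟨_, hw ▸ Red.mul u v x y hxy⟩⟩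
    obtain ⟨u, v, rfl⟩ := append_of_mem hone
    exact ⟨_, Red.one u v⟩
  · rintro ⟨hone, hchain⟩ ⟨w', hw'⟩
    cases hw' with
    | mul u v x y hxy => exact hchain rfl hxy
    | one u v => exact hone (by simp)

theorem Irr.eq_of_reflTransGen {a b : List P} (ha : Irr M a) (h : ReflTransGen (Red M) a b) :
    b = a :=
  (reflTransGen_iff_eq (not_exists.mp ha)).mp h

namespace LstRed

theorem reflTransGen_red {a b : List P} (h : LstRed M a b) : ReflTransGen (Red M) a b := by
  cases h with
  | erase u v => exact .single (Red.one u v)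
  | cancel x y _ _ hxy hone =>
    exact .head (Red.mul [] _ x y hxy) (hone ▸ .single (Red.one [] _))
  | contract u x y v _ hxy => exact .single (Red.mul u v x y hxy)

theorem append_right {a b : List P} {t : List P} (ht : M.one ∉ t) (h : LstRed M a b) :
    LstRed M (a ++ t) (b ++ t) := by
  cases h with
  | erase u v => simpa using erase (M := M) u (v ++ t)
  | cancel x y _ _ hxy hone =>
    simpa using cancel (M := M) x y (b ++ t) (by grind) hxy hone
  | contract u x y v _ hxy hone hchain =>
    simpa using contract (M := M) u x y (v ++ t) (by grind) hxy hone hchain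

theorem cons {a : P} {w w' : List P} (ha : a ≠ M.one) (hdom : ∀ b ∈ w.head?, ¬ M.dom a b)
    (h : LstRed M w w') : LstRed M (a :: w) (a :: w') := by
  cases h with
  | erase u v => exact erase (a :: u) v
  | cancel x y _ _ hxy hone => exact absurd (M.dom_of_mul_eq_one hxy hone) (hdom x rfl)
  | contract u x y v _ hxy hone hchain =>
    refine contract (a :: u) x y v ?_ hxy hone (IsChain.cons hchain ?_)
    · grind
    · cases u <;> simpa using hdom

theorem exists_of_not_isChain : ∀ {w : List P}, M.one ∉ w →
    ¬ w.IsChain (fun a b => ¬ M.dom a b) → ∃ w', LstRed M w w'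
  | [], _, h => absurd .nil h
  | [a], _, h => absurd (.singleton a) h
  | a :: b :: w, hone, h => by
    by_cases hab : M.dom a b
    · have hno : ∀ c ∈ a :: b :: w, c ≠ M.one := forall_mem_ne'.mpr hone
      by_cases habone : M.mul a b = M.one
      · exact ⟨w, cancel a b w hno hab habone⟩
      · exact ⟨_, contract [] a b w hno hab habone (.singleton a)⟩
    · obtain ⟨w', hw'⟩ := exists_of_not_isChain (w := b :: w) (by simp_all) (by simp_all)
      exact ⟨a :: w', hw'.cons (by grind) (by simpa)⟩

end LstRed

theorem not_exists_lstRed_iff {w : List P} :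
    (¬ ∃ w', LstRed M w w') ↔ M.one ∉ w ∧ w.IsChain (fun a b => ¬ M.dom a b) := by
  refine ⟨fun h => ?_, fun ⟨hone, hchain⟩ ⟨w', hw'⟩ => ?_⟩
  · by_cases hone : M.one ∈ w
    · obtain ⟨u, v, rfl⟩ := append_of_mem hone
      exact absurd ⟨_, LstRed.erase u v⟩ h
    · exact ⟨hone, by_contra fun hchain => h (LstRed.exists_of_not_isChain hone hchain)⟩
  · cases hw' with
    | erase u v => exact hone (by simp)
    | cancel x y _ _ hxy => exact (isChain_cons_cons.mp hchain).1 hxy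
    | contract u x y v _ hxy => exact (isChain_append_cons_cons.mp hchain).2.1 hxy

theorem irr_iff_not_exists_lstRed {w : List P} : Irr M w ↔ ¬ ∃ w', LstRed M w w' :=
  irr_iff.trans not_exists_lstRed_iff.symm

namespace LstRed

open scoped Classical in
/-- A step on a word without `1_P` contracts its leftmost composable pair; `cancel` is the case
`u = []`, `x×y = 1_P`. -/
theorem exists_leftmost {a b : List P} (h : LstRed M a b) (ha : M.one ∉ a) :
    ∃ u x y v, a = u ++ x :: y :: v ∧ M.dom x y ∧
      (u ++ [x]).IsChain (fun a b => ¬ M.dom a b) ∧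
      b = u ++ if M.mul x y = M.one then v else M.mul x y :: v := by
  cases h with
  | erase u v => simp at ha
  | cancel x y _ _ hxy hone => exact ⟨[], x, y, b, rfl, hxy, .singleton x, by simp [hone]⟩
  | contract u x y v _ hxy hone hchain => exact ⟨u, x, y, v, rfl, hxy, hchain, by simp [hone]⟩

theorem eq_of_one_not_mem {a b c : List P} (ha : M.one ∉ a) (hb : LstRed M a b)
    (hc : LstRed M a c) : b = c := by
  obtain ⟨u, x, y, v, rfl, hxy, hchain, rfl⟩ := hb.exists_leftmost ha
  obtain ⟨u', x', y', v', h, hxy', hchain', rfl⟩ := hc.exists_leftmost ha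
  obtain ⟨rfl, rfl, rfl, rfl⟩ := eq_of_append_cons_cons_eq_of_isChain h hxy hchain hxy' hchain'
  rfl

theorem exists_erase_of_one_mem {a b : List P} (h : LstRed M a b) (ha : M.one ∈ a) :
    ∃ u v, a = u ++ M.one :: v ∧ b = u ++ v := by
  cases h with
  | erase u v => exact ⟨u, v, rfl, rfl⟩
  | cancel _ _ _ hno => exact absurd rfl (hno _ ha)
  | contract _ _ _ _ hno => exact absurd rfl (hno _ ha)

theorem erase_diamond_of_eq_append {u u' m v v' : List P} (hu : u' = u ++ m)
    (hv : M.one :: v = m ++ M.one :: v') :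
    u ++ v = u' ++ v' ∨ ∃ d, LstRed M (u ++ v) d ∧ LstRed M (u' ++ v') d := by
  subst hu
  cases m with
  | nil => simp_all
  | cons c m =>
    obtain ⟨rfl, rfl⟩ : M.one = c ∧ v = m ++ M.one :: v' := by simpa using hv
    exact .inr ⟨u ++ m ++ v', by simpa using erase (u ++ m) v',
      by simpa using erase u (m ++ v')⟩

theorem erase_diamond {u v u' v' : List P} (h : u ++ M.one :: v = u' ++ M.one :: v') :
    u ++ v = u' ++ v' ∨ ∃ d, LstRed M (u ++ v) d ∧ LstRed M (u' ++ v') d := by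
  rcases append_eq_append_iff.mp h with ⟨m, hu, hv⟩ | ⟨m, hu, hv⟩
  · exact erase_diamond_of_eq_append hu hv
  · rcases erase_diamond_of_eq_append hu hv with h | ⟨d, hd, hd'⟩
    exacts [.inl h.symm, .inr ⟨d, hd', hd⟩]

theorem diamond {a b c : List P} (hb : LstRed M a b) (hc : LstRed M a c) :
    b = c ∨ ∃ d, LstRed M b d ∧ LstRed M c d := by
  by_cases ha : M.one ∈ a
  · obtain ⟨u, v, rfl, rfl⟩ := hb.exists_erase_of_one_mem ha
    obtain ⟨u', v', h, rfl⟩ := hc.exists_erase_of_one_mem ha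
    exact erase_diamond h
  · exact .inl (eq_of_one_not_mem ha hb hc)

theorem exists_one_not_mem_forall_reflTransGen_append (t : List P) :
    ∃ t', M.one ∉ t' ∧ ∀ s, ReflTransGen (LstRed M) (s ++ t) (s ++ t') := by
  induction t with
  | nil => exact ⟨[], not_mem_nil, fun _ => .refl⟩
  | cons c t ih =>
    obtain ⟨t', ht', hred⟩ := ih
    by_cases hc : c = M.one
    · subst hc
      exact ⟨t', ht', fun s => .head (erase s t) (hred s)⟩
    · exact ⟨c :: t', by simp [ht', Ne.symm hc], fun s => by simpa using hred (s ++ [c])⟩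

end LstRed

def IsLstNormalizer (M : PartialMonoid P) (lstd : List P → List P) : Prop :=
  ∀ w, ReflTransGen (LstRed M) w (lstd w) ∧ ¬ ∃ w', LstRed M (lstd w) w'

def IsAssocOnIrr (M : PartialMonoid P) (lstd : List P → List P) : Prop :=
  ∀ u v w, Irr M u → Irr M v → Irr M w →
    lstd (lstd (u ++ v) ++ w) = lstd (u ++ lstd (v ++ w))

namespace IsLstNormalizer

variable {lstd : List P → List P}

theorem irr (hl : IsLstNormalizer M lstd) (w : List P) : Irr M (lstd w) :=
  irr_iff_not_exists_lstRed.mpr (hl w).2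

theorem reflTransGen_red (hl : IsLstNormalizer M lstd) (w : List P) :
    ReflTransGen (Red M) w (lstd w) :=
  reflTransGen_closed (fun _ _ => LstRed.reflTransGen_red) _ _ (hl w).1

theorem apply_eq_self (hl : IsLstNormalizer M lstd) {w : List P} (hw : ¬ ∃ w', LstRed M w w') :
    lstd w = w :=
  (reflTransGen_iff_eq (not_exists.mp hw)).mp (hl w).1

theorem lstd_nil (hl : IsLstNormalizer M lstd) : lstd [] = [] :=
  hl.apply_eq_self (not_exists_lstRed_iff.mpr ⟨not_mem_nil, .nil⟩)

theorem eq_of_reflTransGen (hl : IsLstNormalizer M lstd) {a b : List P}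
    (h : ReflTransGen (LstRed M) a b) : lstd a = lstd b := by
  have hdiamond : ∀ a b c, LstRed M a b → LstRed M a c →
      ∃ d, ReflGen (LstRed M) b d ∧ ReflTransGen (LstRed M) c d := fun _ _ _ hb hc => by
    rcases hb.diamond hc with rfl | ⟨d, hd, hd'⟩
    exacts [⟨_, .refl, .refl⟩, ⟨d, .single hd, .single hd'⟩]
  obtain ⟨d, hda, hdb⟩ := church_rosser hdiamond (hl a).1 (h.trans (hl b).1)
  exact ((reflTransGen_iff_eq (not_exists.mp (hl a).2)).mp hda).symm.trans
    ((reflTransGen_iff_eq (not_exists.mp (hl b).2)).mp hdb)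

theorem lstd_lstd_append (hl : IsLstNormalizer M lstd) (s t : List P) :
    lstd (lstd s ++ t) = lstd (s ++ t) := by
  obtain ⟨t', ht', hred⟩ := LstRed.exists_one_not_mem_forall_reflTransGen_append (M := M) t
  calc lstd (lstd s ++ t) = lstd (lstd s ++ t') := hl.eq_of_reflTransGen (hred _)
    _ = lstd (s ++ t') := (hl.eq_of_reflTransGen
        ((hl s).1.lift (· ++ t') fun _ _ => LstRed.append_right ht')).symm
    _ = lstd (s ++ t) := (hl.eq_of_reflTransGen (hred s)).symm

theorem lstd_singleton_one (hl : IsLstNormalizer M lstd) : lstd [M.one] = [] :=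
  (hl.eq_of_reflTransGen (.single (LstRed.erase [] []))).trans hl.lstd_nil

theorem lstd_append_lstd_singleton (hl : IsLstNormalizer M lstd) (s : List P) (z : P) :
    lstd (s ++ lstd [z]) = lstd (s ++ [z]) := by
  by_cases hz : z = M.one
  · rw [hz, hl.lstd_singleton_one, append_nil]
    exact (hl.eq_of_reflTransGen (.single (by simpa using LstRed.erase (M := M) s []))).symm
  · have hz' : M.one ∉ [z] := by simpa [eq_comm] using hz
    rw [hl.apply_eq_self (not_exists_lstRed_iff.mpr ⟨hz', .singleton z⟩)]

theorem lstd_pair (hl : IsLstNormalizer M lstd) {x y : P} (hxy : M.dom x y) :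
    lstd [x, y] = lstd [M.mul x y] := by
  by_cases hx : x = M.one
  · subst hx
    rw [M.one_mul]
    exact hl.eq_of_reflTransGen (.single (LstRed.erase [] [y]))
  by_cases hy : y = M.one
  · subst hy
    rw [M.mul_one]
    exact hl.eq_of_reflTransGen (.single (LstRed.erase [x] []))
  have hno : ∀ a ∈ [x, y], a ≠ M.one := by simp [hx, hy]
  by_cases hone : M.mul x y = M.one
  · rw [hl.eq_of_reflTransGen (.single (LstRed.cancel x y [] hno hxy hone)), hone,
      hl.lstd_singleton_one, hl.lstd_nil]
  · exact hl.eq_of_reflTransGen (.single (LstRed.contract [] x y [] hno hxy hone (.singleton x)))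

theorem lstd_append_lstd (hl : IsLstNormalizer M lstd) (hassoc : IsAssocOnIrr M lstd)
    (s t : List P) : lstd (s ++ lstd t) = lstd (s ++ t) := by
  induction t using reverseRecOn with
  | nil => rw [hl.lstd_nil]
  | append_singleton t z ih =>
    calc lstd (s ++ lstd (t ++ [z]))
        = lstd (lstd s ++ lstd (lstd t ++ lstd [z])) := by
          rw [hl.lstd_append_lstd_singleton, hl.lstd_lstd_append, hl.lstd_lstd_append]
      _ = lstd (lstd (lstd s ++ lstd t) ++ lstd [z]) :=
          (hassoc _ _ _ (hl.irr s) (hl.irr t) (hl.irr [z])).symm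
      _ = lstd (lstd (s ++ lstd t) ++ [z]) := by
          rw [hl.lstd_append_lstd_singleton, hl.lstd_lstd_append s]
      _ = lstd (s ++ (t ++ [z])) := by rw [ih, hl.lstd_lstd_append, append_assoc]

theorem lstd_append_append_congr (hl : IsLstNormalizer M lstd) (hassoc : IsAssocOnIrr M lstd)
    {l r : List P} (h : lstd l = lstd r) (u v : List P) :
    lstd (u ++ l ++ v) = lstd (u ++ r ++ v) := by
  rw [← hl.lstd_lstd_append (u ++ l), ← hl.lstd_append_lstd hassoc u l, h,
    hl.lstd_append_lstd hassoc, hl.lstd_lstd_append]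

theorem eq_of_reflTransGen_red (hl : IsLstNormalizer M lstd) (hassoc : IsAssocOnIrr M lstd)
    {a b : List P} (h : ReflTransGen (Red M) a b) : lstd a = lstd b := by
  induction h with
  | refl => rfl
  | tail _ hbc ih =>
    refine ih.trans ?_
    cases hbc with
    | mul u v x y hxy => simpa using hl.lstd_append_append_congr hassoc (hl.lstd_pair hxy) u v
    | one u v =>
      simpa using hl.lstd_append_append_congr hassoc (l := [M.one]) (r := [])
        (hl.lstd_singleton_one.trans hl.lstd_nil.symm) u v

theorem confluent_of_assoc (hl : IsLstNormalizer M lstd)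
    (hassoc : IsAssocOnIrr M lstd) : Confluent (Red M) := by
  intro a b c hab hac
  refine ⟨lstd b, hl.reflTransGen_red b, ?_⟩
  rw [← hl.eq_of_reflTransGen_red hassoc hab, hl.eq_of_reflTransGen_red hassoc hac]
  exact hl.reflTransGen_red c

theorem assoc_of_confluent (hl : IsLstNormalizer M lstd) (hconf : Confluent (Red M))
    (u v w : List P) : lstd (lstd (u ++ v) ++ w) = lstd (u ++ lstd (v ++ w)) := by
  have h₁ : ReflTransGen (Red M) (u ++ v ++ w) (lstd (lstd (u ++ v) ++ w)) := by
    simpa using (reflTransGen_red_append_append [] w (hl.reflTransGen_red (u ++ v))).trans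
      (hl.reflTransGen_red _)
  have h₂ : ReflTransGen (Red M) (u ++ v ++ w) (lstd (u ++ lstd (v ++ w))) := by
    simpa using (reflTransGen_red_append_append u [] (hl.reflTransGen_red (v ++ w))).trans
      (hl.reflTransGen_red _)
  obtain ⟨d, hd₁, hd₂⟩ := hconf _ _ _ h₁ h₂
  rw [← (hl.irr _).eq_of_reflTransGen hd₁, ← (hl.irr _).eq_of_reflTransGen hd₂]

end IsLstNormalizer

end

/-- Let `lstd` send each word to its unique `lst(R)`-normal form and let
`u ⋆ v = lstd(u·v)` for `u, v ∈ Irr(P)`. Then `⋆` is associative on `Irr(P)` if and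
only if the semi-Thue system `R_P` is confluent. -/
theorem star_assoc_iff_confluent {P : Type*} (M : PartialMonoid P)
    (lstd : List P → List P)
    (hlstd : ∀ w : List P,
      Relation.ReflTransGen (LstRed M) w (lstd w) ∧ ¬ ∃ w', LstRed M (lstd w) w')
    (star : List P → List P → List P)
    (hstar : ∀ u v : List P, star u v = lstd (u ++ v)) :
    (∀ u v w : List P, Irr M u → Irr M v → Irr M w →
      star (star u v) w = star u (star v w)) ↔ Confluent (Red M) := by
  have hl : IsLstNormalizer M lstd := hlstd
  simp only [hstar]
  exact ⟨hl.confluent_of_assoc, fun hconf u v w _ _ _ => hl.assoc_of_confluent hconf u v w⟩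
end
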